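/- (Theorem 3.2, case d=3; high-energy limit reconstruction of the Fourier transform of the leading multipoint potential.) Fix p ∈ ℝ³ and a vector-valued function γ with |γ(p)| = 1 and γ(p)·p = 0; for E > p²/4 set κ = √E, m_E(p) = (E − p²/4)^{1/2} γ(p), k_E(p) = p/2 + m_E(p) and l_E(p) = −p/2 + m_E(p) (so |k_E(p)| = |l_E(p)| = κ and k_E(p) − l_E(p) = p). Then √E · f(k_E(p), l_E(p)) → −(i/(2π²)) Σ_{j=1}^n e^{i p·y_j} as E → +∞; in particular, the scattering amplitude at high energies determines 𝓕v_{3,1}(p) = (2π)^{-3} Σ_j (−4πi) e^{i p·y_j} for every p ∈ ℝ³. -/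

import Mathlib

open Complex Finset Matrix

noncomputable section

/-- The matrix `A(κ)` for a three-dimensional multipoint potential:
`A(κ)_{jj} = α_j - iκ/(4π)`,
`A(κ)_{jj'} = -e^{iκ‖y_j - y_{j'}‖}/(4π‖y_j - y_{j'}‖)` for `j ≠ j'`. -/
def A3 (n : ℕ) (y : Fin n → EuclideanSpace ℝ (Fin 3)) (α : Fin n → ℂ) (κ : ℝ) :
    Matrix (Fin n) (Fin n) ℂ :=
  fun j j' =>
    if j = j' then α j - Complex.I * κ / (4 * Real.pi)
    else -Complex.exp (Complex.I * κ * ‖y j - y j'‖) / (4 * Real.pi * ‖y j - y j'‖)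

/-- `q(k) = A(κ)⁻¹ b(k)` with `b(k)_j = -e^{i k·y_j}`. -/
def q3 (n : ℕ) (y : Fin n → EuclideanSpace ℝ (Fin 3)) (α : Fin n → ℂ) (κ : ℝ)
    (k : EuclideanSpace ℝ (Fin 3)) : Fin n → ℂ :=
  (A3 n y α κ)⁻¹ *ᵥ fun j => -Complex.exp (Complex.I * (inner ℝ k (y j) : ℝ))

/-- The scattering amplitude `f(k,ℓ) = (2π)⁻³ Σ_j q_j(k) e^{-iℓ·y_j}`. -/
def f3 (n : ℕ) (y : Fin n → EuclideanSpace ℝ (Fin 3)) (α : Fin n → ℂ) (κ : ℝ)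
    (k ℓ : EuclideanSpace ℝ (Fin 3)) : ℂ :=
  ((2 * Real.pi : ℂ) ^ 3)⁻¹ *
    ∑ j, q3 n y α κ k j * Complex.exp (-Complex.I * (inner ℝ ℓ (y j) : ℝ))

/-- The matrix `W(κ)`: `W(κ)_{jj} = α_j`,
`W(κ)_{jj'} = -e^{iκ‖y_j - y_{j'}‖}/(4π‖y_j - y_{j'}‖)` for `j ≠ j'`. -/
def W3 (n : ℕ) (y : Fin n → EuclideanSpace ℝ (Fin 3)) (α : Fin n → ℂ) (κ : ℝ) :
    Matrix (Fin n) (Fin n) ℂ :=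
  fun j j' =>
    if j = j' then α j
    else -Complex.exp (Complex.I * κ * ‖y j - y j'‖) / (4 * Real.pi * ‖y j - y j'‖)

/-- The coefficients `C_m(k,ℓ) = Σ_{j,j'} [W(κ)^m]_{jj'} e^{i(k·y_{j'} - ℓ·y_j)}`. -/
def C3coef (n : ℕ) (y : Fin n → EuclideanSpace ℝ (Fin 3)) (α : Fin n → ℂ) (κ : ℝ)
    (m : ℕ) (k ℓ : EuclideanSpace ℝ (Fin 3)) : ℂ :=
  ∑ j, ∑ j', (W3 n y α κ ^ m) j j' *
    Complex.exp (Complex.I * ((inner ℝ k (y j') : ℝ) - (inner ℝ ℓ (y j) : ℝ)))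

/-! Since `A(κ) = W(κ) - (iκ/4π) • 1` with `W(κ)` bounded in `κ`, we get `κ⁻¹ A(κ) → -(i/4π) • 1`,
hence `κ A(κ)⁻¹ → 4πi • 1` by continuity of the matrix inverse. So `√E f(k, l)` is `(2π)⁻³` times
a bilinear form in two vectors of unimodular phases whose matrix tends to `4πi • 1`: the
off-diagonal terms vanish in the limit, and the diagonal ones carry the phases
`e^{i(k - l)·y_j} = e^{ip·y_j}`, which do not depend on `E`. -/

open Filter Topology

namespace Matrix

variable {ι : Type*} [Fintype ι]

theorem inv_smul_of_ne_zero [DecidableEq ι] {K : Type*} [Field K] (A : Matrix ι ι K) {k : K}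
    (hk : k ≠ 0) : (k • A)⁻¹ = k⁻¹ • A⁻¹ := by
  by_cases hA : IsUnit A.det
  · simpa [Units.smul_def] using inv_smul' A (Units.mk0 k hk) hA
  · have hkA : ¬IsUnit (k • A).det := by simpa [det_smul, hk] using hA
    rw [nonsing_inv_apply_not_isUnit _ hA, nonsing_inv_apply_not_isUnit _ hkA, smul_zero]

variable {X R : Type*} [NormedCommRing R] {l : Filter X} {B : X → Matrix ι ι R}
  {u v : X → ι → R}

theorem tendsto_dotProduct_mulVec_sub {B₀ : Matrix ι ι R} (hB : Tendsto B l (𝓝 B₀))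
    (hu : ∀ x i, ‖u x i‖ ≤ 1) (hv : ∀ x i, ‖v x i‖ ≤ 1) :
    Tendsto (fun x => v x ⬝ᵥ (B x - B₀) *ᵥ u x) l (𝓝 0) := by
  simp only [dotProduct, mulVec, Finset.mul_sum]
  rw [← Finset.sum_const_zero (s := Finset.univ (α := ι))]
  refine tendsto_finsetSum _ fun i _ => ?_
  rw [← Finset.sum_const_zero (s := Finset.univ (α := ι))]
  refine tendsto_finsetSum _ fun j _ => ?_
  have hBij : Tendsto (fun x => ‖B x i j - B₀ i j‖) l (𝓝 0) := by
    simpa using ((hB.apply_nhds i).apply_nhds j).sub_const (B₀ i j) |>.norm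
  refine squeeze_zero_norm (fun x => ?_) hBij
  calc ‖v x i * ((B x - B₀) i j * u x j)‖
      ≤ ‖v x i‖ * (‖B x i j - B₀ i j‖ * ‖u x j‖) :=
        (norm_mul_le _ _).trans (mul_le_mul_of_nonneg_left (norm_mul_le _ _) (norm_nonneg _))
    _ ≤ 1 * (‖B x i j - B₀ i j‖ * 1) := by gcongr <;> simp [hu, hv]
    _ = ‖B x i j - B₀ i j‖ := by ring

theorem tendsto_dotProduct_mulVec_of_tendsto_smul_one [DecidableEq ι] {c : R}
    (hB : Tendsto B l (𝓝 (c • 1))) (hu : ∀ x i, ‖u x i‖ ≤ 1) (hv : ∀ x i, ‖v x i‖ ≤ 1)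
    {w : ι → R} (hw : ∀ x i, v x i * u x i = w i) :
    Tendsto (fun x => v x ⬝ᵥ B x *ᵥ u x) l (𝓝 (c * ∑ i, w i)) := by
  have hmain : ∀ x, v x ⬝ᵥ B x *ᵥ u x = v x ⬝ᵥ (B x - c • 1) *ᵥ u x + c * ∑ i, w i := by
    intro x
    have hvu : v x ⬝ᵥ u x = ∑ i, w i := Finset.sum_congr rfl fun i _ => hw x i
    rw [sub_mulVec, dotProduct_sub, smul_mulVec, one_mulVec, dotProduct_smul, smul_eq_mul, hvu]
    ring
  simpa [hmain] using (tendsto_dotProduct_mulVec_sub hB hu hv).add_const (c * ∑ i, w i)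

end Matrix

section Multipoint

variable (n : ℕ) (y : Fin n → EuclideanSpace ℝ (Fin 3)) (α : Fin n → ℂ)

theorem A3_eq_W3_sub (κ : ℝ) : A3 n y α κ = W3 n y α κ - (I * κ / (4 * Real.pi)) • 1 := by
  ext j j'
  by_cases h : j = j' <;> simp [A3, W3, h]

theorem norm_W3_apply_le (κ : ℝ) (j j' : Fin n) :
    ‖W3 n y α κ j j'‖ ≤ ‖α j‖ + (4 * Real.pi * ‖y j - y j'‖)⁻¹ := by
  by_cases h : j = j'
  · simp only [W3, if_pos h]
    exact le_add_of_nonneg_right (by positivity)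
  · have hphase : ‖exp (I * κ * ‖y j - y j'‖)‖ = 1 := by
      simpa [mul_assoc] using norm_exp_I_mul_ofReal (κ * ‖y j - y j'‖)
    simp only [W3, if_neg h, norm_div, norm_neg, hphase, one_div]
    refine le_add_of_nonneg_of_le (norm_nonneg _) (le_of_eq ?_)
    norm_cast
    rw [Real.norm_of_nonneg (by positivity)]

theorem tendsto_inv_smul_W3 :
    Tendsto (fun κ : ℝ => (κ : ℂ)⁻¹ • W3 n y α κ) atTop (𝓝 0) := by
  refine tendsto_pi_nhds.2 fun j => tendsto_pi_nhds.2 fun j' => ?_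
  have hinv : Tendsto (fun κ : ℝ => (κ : ℂ)⁻¹) atTop (𝓝 0) := by
    simpa [Function.comp_def] using (continuous_ofReal.tendsto 0).comp tendsto_inv_atTop_zero
  simpa using hinv.zero_mul_isBoundedUnder_le
    (isBoundedUnder_of ⟨_, fun κ => norm_W3_apply_le n y α κ j j'⟩)

theorem tendsto_inv_smul_A3 :
    Tendsto (fun κ : ℝ => (κ : ℂ)⁻¹ • A3 n y α κ) atTop
      (𝓝 ((-(I / (4 * Real.pi))) • 1)) := by
  have hW := (tendsto_inv_smul_W3 n y α).sub_const ((I / (4 * Real.pi)) • 1)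
  rw [zero_sub, ← neg_smul] at hW
  refine hW.congr' ?_
  filter_upwards [eventually_ne_atTop 0] with κ hκ
  have hκ' : (κ : ℂ) ≠ 0 := ofReal_ne_zero.2 hκ
  rw [A3_eq_W3_sub, smul_sub, smul_smul]
  congr 2
  field_simp

theorem tendsto_smul_inv_A3 :
    Tendsto (fun κ : ℝ => (κ : ℂ) • (A3 n y α κ)⁻¹) atTop
      (𝓝 ((4 * Real.pi * I : ℂ) • 1)) := by
  have hπ : (Real.pi : ℂ) ≠ 0 := ofReal_ne_zero.2 Real.pi_ne_zero
  have hc : -(I / (4 * Real.pi)) ≠ 0 := by simp [hπ, I_ne_zero]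
  have hinv : ContinuousAt Inv.inv ((-(I / (4 * Real.pi))) • (1 : Matrix (Fin n) (Fin n) ℂ)) := by
    refine continuousAt_matrix_inv _ ?_
    rw [Ring.inverse_eq_inv']
    refine continuousAt_inv₀ ?_
    rw [det_smul, det_one, mul_one]
    exact pow_ne_zero _ hc
  have hc_inv : (-(I / (4 * Real.pi)))⁻¹ = 4 * Real.pi * I := by
    field_simp
    simp
  have hlim := hinv.tendsto.comp (tendsto_inv_smul_A3 n y α)
  rw [inv_smul_of_ne_zero _ hc, inv_one, hc_inv] at hlim
  refine hlim.congr' ?_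
  filter_upwards [eventually_ne_atTop 0] with κ hκ
  simp [inv_smul_of_ne_zero _ (inv_ne_zero (ofReal_ne_zero.2 hκ))]

theorem ofReal_mul_f3 (κ : ℝ) (k ℓ : EuclideanSpace ℝ (Fin 3)) :
    (κ : ℂ) * f3 n y α κ k ℓ = ((2 * Real.pi : ℂ) ^ 3)⁻¹ *
      ((fun j => exp (-I * (inner ℝ ℓ (y j) : ℝ))) ⬝ᵥ ((κ : ℂ) • (A3 n y α κ)⁻¹) *ᵥ
        fun j => -exp (I * (inner ℝ k (y j) : ℝ))) := by
  rw [f3, q3, smul_mulVec, dotProduct_smul, dotProduct_comm, smul_eq_mul, dotProduct]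
  ring

end Multipoint

theorem stmt19_general (n : ℕ) (y : Fin n → EuclideanSpace ℝ (Fin 3)) (α : Fin n → ℂ)
    (p γ : EuclideanSpace ℝ (Fin 3)) :
    Filter.Tendsto
      (fun E : ℝ =>
        (Real.sqrt E : ℂ) * f3 n y α (Real.sqrt E)
          ((1 / 2 : ℝ) • p + Real.sqrt (E - ‖p‖ ^ 2 / 4) • γ)
          ((-(1 / 2) : ℝ) • p + Real.sqrt (E - ‖p‖ ^ 2 / 4) • γ))
      Filter.atTop
      (nhds (-(Complex.I / (2 * (Real.pi : ℂ) ^ 2)) *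
        ∑ j, Complex.exp (Complex.I * (inner ℝ p (y j) : ℝ)))) := by
  set k : ℝ → EuclideanSpace ℝ (Fin 3) := fun E => (1 / 2 : ℝ) • p + √(E - ‖p‖ ^ 2 / 4) • γ
  set ℓ : ℝ → EuclideanSpace ℝ (Fin 3) := fun E => (-(1 / 2) : ℝ) • p + √(E - ‖p‖ ^ 2 / 4) • γ
  have hkℓ : ∀ E, k E - ℓ E = p := fun E => by
    rw [add_sub_add_right_eq_sub, ← sub_smul]
    norm_num
  have hphase : ∀ E j, exp (-I * (inner ℝ (ℓ E) (y j) : ℝ)) * -exp (I * (inner ℝ (k E) (y j) : ℝ))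
      = -exp (I * (inner ℝ p (y j) : ℝ)) := fun E j => by
    rw [← hkℓ E, inner_sub_left, mul_neg, ← exp_add]
    push_cast
    ring_nf
  have hu : ∀ E j, ‖-exp (I * (inner ℝ (k E) (y j) : ℝ))‖ ≤ 1 := fun E j => by
    rw [norm_neg, norm_exp_I_mul_ofReal]
  have hv : ∀ E j, ‖exp (-I * (inner ℝ (ℓ E) (y j) : ℝ))‖ ≤ 1 := fun E j => by
    simpa using (norm_exp_I_mul_ofReal (-inner ℝ (ℓ E) (y j))).le
  have hlim := (tendsto_dotProduct_mulVec_of_tendsto_smul_one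
    ((tendsto_smul_inv_A3 n y α).comp Real.tendsto_sqrt_atTop) hu hv hphase).const_mul
    ((2 * Real.pi : ℂ) ^ 3)⁻¹
  convert hlim using 2 with E
  · exact ofReal_mul_f3 n y α _ _ _
  · have hπ : (Real.pi : ℂ) ≠ 0 := ofReal_ne_zero.2 Real.pi_ne_zero
    rw [Finset.sum_neg_distrib]
    field_simp
    ring

/-- Theorem 3.2, case d = 3: high-energy limit reconstruction of the Fourier transform
of the leading multipoint potential. -/
theorem stmt19 (n : ℕ) (y : Fin n → EuclideanSpace ℝ (Fin 3)) (α : Fin n → ℂ)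
    (hy : Function.Injective y)
    (p γ : EuclideanSpace ℝ (Fin 3)) (hγ : ‖γ‖ = 1) (hγp : (inner ℝ γ p : ℝ) = 0) :
    Filter.Tendsto
      (fun E : ℝ =>
        (Real.sqrt E : ℂ) * f3 n y α (Real.sqrt E)
          ((1 / 2 : ℝ) • p + Real.sqrt (E - ‖p‖ ^ 2 / 4) • γ)
          ((-(1 / 2) : ℝ) • p + Real.sqrt (E - ‖p‖ ^ 2 / 4) • γ))
      Filter.atTop
      (nhds (-(Complex.I / (2 * (Real.pi : ℂ) ^ 2)) *
        ∑ j, Complex.exp (Complex.I * (inner ℝ p (y j) : ℝ)))) :=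
  stmt19_general n y α p γ
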